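/- For all strings w and w'', there exists a PWπ run ⟨p_root; w⟩ →* ⟨⊥; w''⟩ if and only if there exists a string w' with w = w'·w'' and w' ∈ L(e). In other words, the PWπ machine can terminate in state ⟨⊥; w''⟩ exactly when it has matched the regular expression e against some prefix w' of the input w. -/

import Mathlib

/-!
Formalization of backtracking regular-expression matching (PWπ / PWFπ / HFπ machines).

Nodes of the syntax tree of a fixed regular expression `e` are represented as
positions (lists of booleans: `false` = left/only child, `true` = right child).
`e.sub p` is the subexpression at position `p` (`none` if the position is invalid),
and `e.kont p` is the continuation pointer `k(p)` (`none` represents `⊥`).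
-/

inductive RE (σ : Type) : Type where
  | sym : σ → RE σ
  | eps : RE σ
  | cat : RE σ → RE σ → RE σ
  | alt : RE σ → RE σ → RE σ
  | star : RE σ → RE σ

/-- A position (node) in the syntax tree. The root is `[]`. -/
abbrev RPos : Type := List Bool

/-- A node pointer: either a position or `⊥` (represented by `none`). -/
abbrev RNode : Type := Option RPos

/-- A configuration of the PWπ machine: a pointer and the remaining input. -/
abbrev RConf (σ : Type) : Type := RNode × List σ

namespace RE

variable {σ : Type}

/-- The subexpression `π(p)` of `e` at position `p` (`none` if `p` is invalid). -/
def sub : RE σ → RPos → Option (RE σ)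
  | f, [] => some f
  | cat f1 f2, b :: p => sub (if b then f2 else f1) p
  | alt f1 f2, b :: p => sub (if b then f2 else f1) p
  | star f1, false :: p => sub f1 p
  | _, _ => none

/-- `kontAux f cur rest kc` computes the continuation of the node at position
`cur ++ rest`, where `f` is the subexpression at `cur` and `kc` is the
continuation of the node at `cur`. -/
def kontAux : RE σ → RPos → RPos → RNode → RNode
  | _, _, [], kc => kc
  | cat f1 _, cur, false :: rest, _ => kontAux f1 (cur ++ [false]) rest (some (cur ++ [true]))
  | cat _ f2, cur, true :: rest, kc => kontAux f2 (cur ++ [true]) rest kc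
  | alt f1 _, cur, false :: rest, kc => kontAux f1 (cur ++ [false]) rest kc
  | alt _ f2, cur, true :: rest, kc => kontAux f2 (cur ++ [true]) rest kc
  | star f1, cur, false :: rest, _ => kontAux f1 (cur ++ [false]) rest (some cur)
  | _, _, _, _ => none

/-- The continuation pointer `k(p)`; `k(p_root) = ⊥ = none`. -/
def kont (e : RE σ) (p : RPos) : RNode := kontAux e [] p none

/-- `π` extended to node pointers. -/
def subN (e : RE σ) : RNode → Option (RE σ)
  | none => none
  | some p => e.sub p

/-- `k` extended to node pointers. -/
def kontN (e : RE σ) : RNode → RNode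
  | none => none
  | some p => e.kont p

/-- The language of a regular expression. -/
def lang : RE σ → Language σ
  | sym a => {[a]}
  | eps => 1
  | cat f1 f2 => lang f1 * lang f2
  | alt f1 f2 => lang f1 + lang f2
  | star f => KStar.kstar (lang f)

/-- The transition relation of the PWπ machine. -/
inductive PWStep (e : RE σ) : RConf σ → RConf σ → Prop
  | altL {p : RPos} {f1 f2 : RE σ} {w : List σ} :
      e.sub p = some (alt f1 f2) → PWStep e (some p, w) (some (p ++ [false]), w)
  | altR {p : RPos} {f1 f2 : RE σ} {w : List σ} :
      e.sub p = some (alt f1 f2) → PWStep e (some p, w) (some (p ++ [true]), w)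
  | starK {p : RPos} {f1 : RE σ} {w : List σ} :
      e.sub p = some (star f1) → PWStep e (some p, w) (e.kont p, w)
  | starI {p : RPos} {f1 : RE σ} {w : List σ} :
      e.sub p = some (star f1) → PWStep e (some p, w) (some (p ++ [false]), w)
  | catL {p : RPos} {f1 f2 : RE σ} {w : List σ} :
      e.sub p = some (cat f1 f2) → PWStep e (some p, w) (some (p ++ [false]), w)
  | symC {p : RPos} {a : σ} {w : List σ} :
      e.sub p = some (sym a) → PWStep e (some p, a :: w) (e.kont p, w)
  | epsC {p : RPos} {w : List σ} :
      e.sub p = some eps → PWStep e (some p, w) (e.kont p, w)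

/-- `IsPath e t p w q` : `t : p ⇒[w] q` is a path of pointers labelled by the string `w`. -/
inductive IsPath (e : RE σ) : List RNode → RNode → List σ → RNode → Prop
  | single (p : RNode) : IsPath e [p] p [] p
  | snoc {t : List RNode} {p q q' : RNode} {w w' w1 : List σ} :
      IsPath e t p w q → PWStep e (q, w' ++ w1) (q', w1) →
      IsPath e (t ++ [q']) p (w ++ w') q'

/-- The transition relation of the PWFπ (backtracking) machine on stacks of
PWπ configurations. -/
inductive PWFStep (e : RE σ) : List (RConf σ) → List (RConf σ) → Prop
  | one {c c' : RConf σ} {f : List (RConf σ)} :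
      PWStep e c c' → (∀ d, PWStep e c d → d = c') → PWFStep e (c :: f) (c' :: f)
  | two {c c1 c2 : RConf σ} {f : List (RConf σ)} :
      PWStep e c c1 → PWStep e c c2 → c1 ≠ c2 →
      (∀ d, PWStep e c d → d = c1 ∨ d = c2) → PWFStep e (c :: f) (c1 :: c2 :: f)
  | fail {c : RConf σ} {f : List (RConf σ)} :
      (∀ d, ¬ PWStep e c d) → PWFStep e (c :: f) f

end RE

/-- `NSteps R n a b` : there is a sequence of exactly `n` `R`-transitions from `a` to `b`. -/
def NSteps {α : Type*} (R : α → α → Prop) : ℕ → α → α → Prop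
  | 0, a, b => a = b
  | n + 1, a, b => ∃ c, R a c ∧ NSteps R n c b

namespace RE

variable {σ : Type}

/-- A non-consuming PWπ transition, viewed as a relation on pointers. -/
def EpsStep (e : RE σ) (p q : RNode) : Prop := PWStep e (p, ([] : List σ)) (q, [])

/-- `L` is (a list representing) `evolve(p)`: the nodes reachable from `p` by
non-consuming transitions whose subexpression is an input symbol. -/
def IsEvolve (e : RE σ) (p : RNode) (L : List RNode) : Prop :=
  ∀ q, q ∈ L ↔ (Relation.ReflTransGen (EpsStep e) p q ∧ ∃ a, e.subN q = some (sym a))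

/-- `DRel e a P r` : `r` is a result of the derivative computation `D_a(P)`. -/
inductive DRel (e : RE σ) (a : σ) : List RNode → List RNode → Prop
  | nil : DRel e a [] []
  | symNe {h : RNode} {t r : List RNode} {b : σ} :
      e.subN h = some (sym b) → b ≠ a → DRel e a t r → DRel e a (h :: t) r
  | symEq {h : RNode} {t r : List RNode} :
      e.subN h = some (sym a) → DRel e a t r → DRel e a (h :: t) (e.kontN h :: r)
  | ev {h : RNode} {t r L : List RNode} :
      (∀ b, e.subN h ≠ some (sym b)) → IsEvolve e h L →
      DRel e a (L ++ t) r → DRel e a (h :: t) r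

/-- The transition relation on wP frames: `(w, P) → (w·a, D_a(P))` when `D_a(P) ≠ []`. -/
inductive WPStep (e : RE σ) : List σ × List RNode → List σ × List RNode → Prop
  | mk {w : List σ} {P : List RNode} {a : σ} {r : List RNode} :
      DRel e a P r → r ≠ [] → WPStep e (w, P) (w ++ [a], r)

end RE

/-- A configuration of the HFπ machine: a history (set of node-sets) and a
queue of wP frames. -/
abbrev HFConf (σ : Type) : Type := Finset (Finset RNode) × List (List σ × List RNode)

namespace RE

variable {σ : Type}

/-- The transition relation of the HFπ machine: the head frame `(w, P)` is replaced by
exactly those of its wP-successors (one for each viable symbol) whose node-sets are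
not in the history `H`, and their node-sets are added to `H`. -/
inductive HFStep (e : RE σ) : HFConf σ → HFConf σ → Prop
  | mk {H : Finset (Finset RNode)} {w : List σ} {P : List RNode}
      {f : List (List σ × List RNode)} (l : List (σ × List RNode)) :
      (l.map Prod.fst).Nodup →
      (∀ x ∈ l, DRel e x.1 P x.2 ∧ x.2 ≠ [] ∧ x.2.toFinset ∉ H) →
      (∀ (a : σ) (r : List RNode), DRel e a P r → r ≠ [] → r.toFinset ∉ H →
        ∃ r', (a, r') ∈ l ∧ r'.toFinset = r.toFinset) →
      HFStep e (H, (w, P) :: f)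
        (H ∪ (l.map (fun x => x.2.toFinset)).toFinset,
         f ++ l.map (fun x => (w ++ [x.1], x.2)))

/-- Every starred subexpression of `e` has a body that does not match the empty string. -/
def NonNullableStars (e : RE σ) : Prop :=
  ∀ (p : RPos) (f : RE σ), e.sub p = some (star f) → ([] : List σ) ∉ lang f

end RE

/-!
A run from `⟨q; w⟩` to `⟨⊥; w''⟩` is described declaratively by `ContMatch`: a prefix of `w`
matches `π(q)` and the rest is handled from `k(q)`. Completeness is an induction on the
expression, chaining the runs of the children through their continuations. For soundness,
`ContMatch` is closed under backward steps of the machine, so no induction on the length of a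
run is needed even though the body of a star hands control back to the star itself.
-/

namespace RE

variable {σ : Type}

lemma sub_append (e : RE σ) (p q : RPos) :
    e.sub (p ++ q) = (e.sub p).bind (fun f => f.sub q) := by
  induction p generalizing e with
  | nil => cases e <;> rfl
  | cons b p ih => cases e <;> cases b <;> simp [sub, ih]

lemma sub_snoc_of_sub_eq {e f : RE σ} {p : RPos} (b : Bool) (h : e.sub p = some f) :
    e.sub (p ++ [b]) = f.sub [b] := by
  rw [sub_append, h, Option.bind_some]

/-- `k(p ++ [b])`, computed from the subexpression, position and continuation of its parent `p`. -/
def childKont : RE σ → RPos → RNode → Bool → RNode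
  | cat _ _, p, _, false => some (p ++ [true])
  | cat _ _, _, k, true => k
  | alt _ _, _, k, _ => k
  | star _, p, _, false => some p
  | _, _, _, _ => none

lemma kontAux_snoc (rest : RPos) (f : RE σ) (cur : RPos) (kc : RNode) (b : Bool) :
    kontAux f cur (rest ++ [b]) kc =
      (f.sub rest).elim none (fun g => childKont g (cur ++ rest) (kontAux f cur rest kc) b) := by
  induction rest generalizing f cur kc with
  | nil => cases f <;> cases b <;> simp [kontAux, sub, childKont]
  | cons c rest ih =>
    cases f <;> cases c <;> simp only [kontAux, sub, List.cons_append] <;>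
      first | rfl | (rw [ih]; simp)

lemma kont_snoc_of_sub_eq {e f : RE σ} {p : RPos} (b : Bool) (h : e.sub p = some f) :
    e.kont (p ++ [b]) = childKont f p (e.kont p) b := by
  simpa [kont, h] using kontAux_snoc p e [] none b

lemma kont_nil (e : RE σ) : e.kont [] = none := by
  cases e <;> rfl

lemma append_mem_lang_star {f : RE σ} {x y : List σ} (hx : x ∈ f.lang)
    (hy : y ∈ (star f).lang) : x ++ y ∈ (star f).lang := by
  rw [lang, ← Language.one_add_self_mul_kstar_eq_kstar]
  exact Or.inr ⟨x, hx, y, hy, rfl⟩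

/-- `ContMatch e w'' q w`: `w` is consumed by matching `π(q)`, then `π(k(q))`, and so on,
until `⊥` is reached with `w''` left. -/
inductive ContMatch (e : RE σ) (w'' : List σ) : RNode → List σ → Prop
  | bot : ContMatch e w'' none w''
  | node {p : RPos} {f : RE σ} {x u : List σ} :
      e.sub p = some f → x ∈ f.lang → ContMatch e w'' (e.kont p) u →
      ContMatch e w'' (some p) (x ++ u)

lemma ContMatch.exists_split {e f : RE σ} {w'' w : List σ} {p : RPos} (hp : e.sub p = some f)
    (h : ContMatch e w'' (some p) w) :
    ∃ x u, w = x ++ u ∧ x ∈ f.lang ∧ ContMatch e w'' (e.kont p) u := by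
  obtain _ | ⟨hp', hx, hu⟩ := h
  cases hp.symm.trans hp'
  exact ⟨_, _, rfl, hx, hu⟩

lemma ContMatch.of_pwStep {e : RE σ} {w'' : List σ} {c c' : RConf σ} (hstep : PWStep e c c')
    (h : ContMatch e w'' c'.1 c'.2) : ContMatch e w'' c.1 c.2 := by
  cases hstep with
  | altL hp =>
    obtain ⟨x, u, rfl, hx, hu⟩ := h.exists_split (sub_snoc_of_sub_eq false hp)
    rw [kont_snoc_of_sub_eq false hp] at hu
    exact .node hp (Or.inl hx) hu
  | altR hp =>
    obtain ⟨x, u, rfl, hx, hu⟩ := h.exists_split (sub_snoc_of_sub_eq true hp)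
    rw [kont_snoc_of_sub_eq true hp] at hu
    exact .node hp (Or.inr hx) hu
  | starK hp => exact .node (x := []) hp (Language.nil_mem_kstar _) h
  | starI hp =>
    obtain ⟨x, u, rfl, hx, hu⟩ := h.exists_split (sub_snoc_of_sub_eq false hp)
    rw [kont_snoc_of_sub_eq false hp] at hu
    obtain ⟨y, v, rfl, hy, hv⟩ := hu.exists_split hp
    rw [← List.append_assoc]
    exact .node hp (append_mem_lang_star hx hy) hv
  | catL hp =>
    obtain ⟨x, u, rfl, hx, hu⟩ := h.exists_split (sub_snoc_of_sub_eq false hp)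
    rw [kont_snoc_of_sub_eq false hp] at hu
    obtain ⟨y, v, rfl, hy, hv⟩ := hu.exists_split (sub_snoc_of_sub_eq true hp)
    rw [kont_snoc_of_sub_eq true hp] at hv
    rw [← List.append_assoc]
    exact .node hp ⟨x, hx, y, hy, rfl⟩ hv
  | symC hp => exact .node (x := [_]) hp rfl h
  | epsC hp => exact .node (x := []) hp rfl h

lemma ContMatch.of_reflTransGen {e : RE σ} {w'' : List σ} {c : RConf σ}
    (h : Relation.ReflTransGen (PWStep e) c (none, w'')) : ContMatch e w'' c.1 c.2 := by
  induction h using Relation.ReflTransGen.head_induction_on with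
  | refl => exact .bot
  | head hstep _ ih => exact ih.of_pwStep hstep

lemma reflTransGen_kont_of_mem_lang {e f : RE σ} {p : RPos} (hp : e.sub p = some f)
    {x : List σ} (hx : x ∈ f.lang) (u : List σ) :
    Relation.ReflTransGen (PWStep e) (some p, x ++ u) (e.kont p, u) := by
  induction f generalizing p x u with
  | sym a =>
    obtain rfl : x = [a] := hx
    exact .single (.symC hp)
  | eps =>
    obtain rfl : x = [] := hx
    exact .single (.epsC hp)
  | cat f1 f2 ih1 ih2 =>
    obtain ⟨y, hy, z, hz, rfl⟩ := hx
    have run1 := ih1 (sub_snoc_of_sub_eq false hp) hy (z ++ u)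
    have run2 := ih2 (sub_snoc_of_sub_eq true hp) hz u
    rw [kont_snoc_of_sub_eq false hp] at run1
    rw [kont_snoc_of_sub_eq true hp] at run2
    rw [List.append_assoc]
    exact .head (.catL hp) (run1.trans run2)
  | alt f1 f2 ih1 ih2 =>
    rcases hx with hx | hx
    · have run := ih1 (sub_snoc_of_sub_eq false hp) hx u
      rw [kont_snoc_of_sub_eq false hp] at run
      exact .head (.altL hp) run
    · have run := ih2 (sub_snoc_of_sub_eq true hp) hx u
      rw [kont_snoc_of_sub_eq true hp] at run
      exact .head (.altR hp) run
  | star f ih =>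
    obtain ⟨L, rfl, hL⟩ := Language.mem_kstar.mp hx
    clear hx
    induction L with
    | nil => exact .single (.starK hp)
    | cons y L ihL =>
      have run := ih (sub_snoc_of_sub_eq false hp) (hL y List.mem_cons_self) (L.flatten ++ u)
      rw [kont_snoc_of_sub_eq false hp] at run
      rw [List.flatten_cons, List.append_assoc]
      exact .head (.starI hp) (run.trans (ihL fun z hz => hL z (List.mem_cons_of_mem y hz)))

lemma ContMatch.reflTransGen {e : RE σ} {w'' : List σ} {q : RNode} {w : List σ}
    (h : ContMatch e w'' q w) : Relation.ReflTransGen (PWStep e) (q, w) (none, w'') := by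
  induction h with
  | bot => exact .refl
  | node hp hx _ ih => exact (reflTransGen_kont_of_mem_lang hp hx _).trans ih

lemma contMatch_root_iff {e : RE σ} {w w'' : List σ} :
    ContMatch e w'' (some []) w ↔ ∃ w', w = w' ++ w'' ∧ w' ∈ e.lang := by
  constructor
  · rintro (_ | ⟨hp, hx, hu⟩)
    rw [kont_nil] at hu
    cases hu
    cases hp
    exact ⟨_, rfl, hx⟩
  · rintro ⟨w', rfl, hw'⟩
    exact .node rfl hw' (kont_nil e ▸ .bot)

end RE

/-- the PWπ machine can run `⟨p_root; w⟩ →* ⟨⊥; w''⟩` iff `e`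
matches some prefix `w'` of `w` with `w = w'·w''`. -/
theorem run_iff_prefix_match {σ : Type} (e : RE σ) (w w'' : List σ) :
    Relation.ReflTransGen (RE.PWStep e) (some ([] : RPos), w) (none, w'') ↔
      ∃ w', w = w' ++ w'' ∧ w' ∈ RE.lang e := by
  rw [← RE.contMatch_root_iff]
  exact ⟨RE.ContMatch.of_reflTransGen, RE.ContMatch.reflTransGen⟩
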